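/- Gödel's second incompleteness theorem: let T be a consistent, computably axiomatized extension of Peano arithmetic whose provability predicate Bew satisfies the Hilbert–Bernays–Löb conditions. Then T ⊬ ¬Bew(⌜⊥⌝), i.e., T does not prove its own consistency. -/

import Mathlib

open FirstOrder FirstOrder.Language

/-- The function symbols of the language of arithmetic: `0`, `S`, `+`, `×`. -/
inductive ArithFunc : ℕ → Type
  | zero : ArithFunc 0
  | succ : ArithFunc 1
  | add : ArithFunc 2
  | mul : ArithFunc 2

/-- The first-order language of arithmetic `{0, S, +, ×, =}` (equality is built in). -/
def LA : FirstOrder.Language := ⟨ArithFunc, fun _ => Empty⟩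

instance : Encodable (Σ n, LA.Functions n) :=
  Encodable.ofLeftInverse
    (fun f => match f with
      | ⟨_, .zero⟩ => 0 | ⟨_, .succ⟩ => 1 | ⟨_, .add⟩ => 2 | ⟨_, .mul⟩ => 3)
    (fun n => match n with
      | 0 => ⟨0, .zero⟩ | 1 => ⟨1, .succ⟩ | 2 => ⟨2, .add⟩ | _ => ⟨2, .mul⟩)
    (fun f => by rcases f with ⟨_, f⟩; cases f <;> rfl)

instance (n : ℕ) : Encodable (LA.Relations n) := inferInstanceAs (Encodable Empty)

/-- The term `0`. -/
def zeroT {α : Type} : LA.Term α := Term.func ArithFunc.zero ![]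
/-- The successor of a term. -/
def succT {α : Type} (t : LA.Term α) : LA.Term α := Term.func ArithFunc.succ ![t]
/-- The sum of two terms. -/
def addT {α : Type} (t s : LA.Term α) : LA.Term α := Term.func ArithFunc.add ![t, s]
/-- The product of two terms. -/
def mulT {α : Type} (t s : LA.Term α) : LA.Term α := Term.func ArithFunc.mul ![t, s]

/-- The numeral `n̄ = Sⁿ(0)`. -/
def num {α : Type} : ℕ → LA.Term α
  | 0 => zeroT
  | n + 1 => succT (num n)

/-- Robinson's arithmetic `Q`. -/
def Q : LA.Theory :=
  { ∀' ∼(succT &0 =' zeroT),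
    ∀' ∀' (succT &0 =' succT &1 ⟹ &0 =' &1),
    ∀' ((&0 =' zeroT) ⊔ ∃' (&0 =' succT &1)),
    ∀' (addT &0 zeroT =' &0),
    ∀' ∀' (addT &0 (succT &1) =' succT (addT &0 &1)),
    ∀' (mulT &0 zeroT =' zeroT),
    ∀' ∀' (mulT &0 (succT &1) =' addT (mulT &0 &1) &0) }

/-- The standard model `ℕ` of arithmetic. -/
instance : LA.Structure ℕ where
  funMap {_} f := match f with
    | .zero => fun _ => 0
    | .succ => fun v => v 0 + 1
    | .add => fun v => v 0 + v 1
    | .mul => fun v => v 0 * v 1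
  RelMap {_} r := Empty.elim r

/-- The Gödel number of a sentence, via Mathlib's encoding of first-order formulas. -/
def gnum (φ : LA.Sentence) : ℕ := Encodable.encode (BoundedFormula.listEncode φ)

/-- A theory is computably axiomatized when its set of (Gödel numbers of) axioms is
decidable. -/
def ComputablyAxiomatized (T : LA.Theory) : Prop :=
  ComputablePred fun n : ℕ => ∃ φ ∈ T, gnum φ = n

/-- The induction axiom for a formula `φ(x⃗, y)` (parameters `x⃗`, induction variable `y`):
`∀x⃗ ∀y ((φ(x⃗,0) ∧ ∀u (φ(x⃗,u) → φ(x⃗,S u))) → φ(x⃗,y))`. -/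
noncomputable def indAxiom {m : ℕ} (φ : LA.Formula (Fin m ⊕ Fin 1)) : LA.Sentence :=
  let subLast : LA.Term (Fin m ⊕ Fin 1) → LA.Formula (Fin m ⊕ Fin 1) := fun t =>
    BoundedFormula.subst φ (Sum.elim (fun i => Term.var (Sum.inl i)) fun _ => t)
  let base := subLast zeroT
  let step : LA.Formula (Fin m) :=
    Formula.iAlls (Fin 1)
      (φ ⟹ subLast (succT (Term.var (Sum.inr 0))))
  Formula.iAlls (Fin m ⊕ Fin 1) (Formula.relabel (Sum.inr : Fin m ⊕ Fin 1 → Empty ⊕ (Fin m ⊕ Fin 1))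
    ((base ⊓ Formula.relabel Sum.inl step) ⟹ φ))

/-- Peano arithmetic: Robinson's arithmetic together with the induction scheme. -/
noncomputable def PA : LA.Theory :=
  Q ∪ ⋃ m : ℕ, Set.range fun φ : LA.Formula (Fin m ⊕ Fin 1) => indAxiom φ

/-- `□A`: the sentence `Bew(⌜A⌝)`. -/
def boxS (Bew : LA.Formula (Fin 1)) (A : LA.Sentence) : LA.Sentence :=
  BoundedFormula.subst Bew fun _ => (num (gnum A) : LA.Term Empty)

/-! From the fixed point, `T ⊢ G → (□G → ⊥)`; boxing and distributing gives
`T ⊢ □G → (□□G → □⊥)`, and with `T ⊢ □G → □□G` this is `T ⊢ □G → □⊥`. Hence if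
`T ⊢ ¬□⊥`, then `T ⊢ ¬□G`, i.e. `T ⊢ G`, and by necessitation `T ⊢ □G`: `T` is inconsistent. -/

namespace FirstOrder.Language

variable {L : Language}

theorem Theory.models_mp {T : L.Theory} {φ ψ : L.Sentence} (hφψ : T ⊨ᵇ φ ⟹ ψ) (hφ : T ⊨ᵇ φ) :
    T ⊨ᵇ ψ :=
  fun M v xs => hφψ M v xs (hφ M v xs)

structure HBLConditions (T : L.Theory) (box : L.Sentence → L.Sentence) : Prop where
  necessitation : ∀ A, T ⊨ᵇ A → T ⊨ᵇ box A
  distribution : ∀ A B, T ⊨ᵇ (box (A ⟹ B) ⟹ box A ⟹ box B)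
  box_imp_box_box : ∀ A, T ⊨ᵇ (box A ⟹ box (box A))

namespace HBLConditions

variable {T : L.Theory} {box : L.Sentence → L.Sentence}

theorem box_mono (hbox : HBLConditions T box) {A B : L.Sentence} (hAB : T ⊨ᵇ A ⟹ B) :
    T ⊨ᵇ box A ⟹ box B :=
  Theory.models_mp (hbox.distribution A B) (hbox.necessitation _ hAB)

theorem box_imp_box_bot_of_fixedPoint (hbox : HBLConditions T box) {G : L.Sentence}
    (hG : T ⊨ᵇ G ⇔ ∼(box G)) : T ⊨ᵇ box G ⟹ box ⊥ := by
  have hG_imp : T ⊨ᵇ G ⟹ (box G ⟹ ⊥) := fun M v xs =>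
    (BoundedFormula.realize_iff.1 (hG M v xs)).1
  have h₁ := hbox.box_mono hG_imp
  have h₂ := hbox.distribution (box G) ⊥
  have h₃ := hbox.box_imp_box_box G
  exact fun M v xs hboxG => h₂ M v xs (h₁ M v xs hboxG) (h₃ M v xs hboxG)

theorem models_of_models_not_box_bot (hbox : HBLConditions T box)
    {G : L.Sentence} (hG : T ⊨ᵇ G ⇔ ∼(box G)) (hcon : T ⊨ᵇ ∼(box ⊥)) : T ⊨ᵇ G := by
  have hbox_bot := hbox.box_imp_box_bot_of_fixedPoint hG
  exact fun M v xs =>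
    (BoundedFormula.realize_iff.1 (hG M v xs)).2 fun hboxG => hcon M v xs (hbox_bot M v xs hboxG)

theorem not_models_not_box_bot (hbox : HBLConditions T box) (hcon : ¬ T ⊨ᵇ (⊥ : L.Sentence))
    {G : L.Sentence} (hG : T ⊨ᵇ G ⇔ ∼(box G)) : ¬ T ⊨ᵇ ∼(box ⊥) := by
  intro hcons
  have hGT := hbox.models_of_models_not_box_bot hG hcons
  have hnot_box_G : T ⊨ᵇ ∼(box G) := fun M v xs =>
    (BoundedFormula.realize_iff.1 (hG M v xs)).1 (hGT M v xs)
  exact hcon (Theory.models_mp hnot_box_G (hbox.necessitation G hGT))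

end HBLConditions

end FirstOrder.Language

theorem godel_second_general (T : LA.Theory)
    (hcon : ¬ T ⊨ᵇ (⊥ : LA.Sentence))
    (Bew : LA.Formula (Fin 1))
    (hbl1 : ∀ A : LA.Sentence, T ⊨ᵇ A → T ⊨ᵇ boxS Bew A)
    (hbl2 : ∀ A B : LA.Sentence, T ⊨ᵇ (boxS Bew (A ⟹ B) ⟹ boxS Bew A ⟹ boxS Bew B))
    (hbl3 : ∀ A : LA.Sentence, T ⊨ᵇ (boxS Bew A ⟹ boxS Bew (boxS Bew A)))
    (G : LA.Sentence) (hG : T ⊨ᵇ (G ⇔ BoundedFormula.not (boxS Bew G))) :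
    ¬ T ⊨ᵇ BoundedFormula.not (boxS Bew (⊥ : LA.Sentence)) :=
  HBLConditions.not_models_not_box_bot ⟨hbl1, hbl2, hbl3⟩ hcon hG

/-- Gödel's second incompleteness theorem: if `T` is a consistent,
computably axiomatized extension of Peano arithmetic whose provability predicate `Bew`
satisfies the Hilbert–Bernays–Löb conditions (with a Gödel fixed point
`T ⊢ G ↔ ¬□G` given by the diagonal lemma), then `T ⊬ ¬Bew(⌜⊥⌝)`: `T` does not prove
its own consistency. -/
theorem godel_second (T : LA.Theory) (hPA : PA ⊆ T)
    (hax : ComputablyAxiomatized T) (hcon : ¬ T ⊨ᵇ (⊥ : LA.Sentence))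
    (Bew : LA.Formula (Fin 1))
    (hbl1 : ∀ A : LA.Sentence, T ⊨ᵇ A → T ⊨ᵇ boxS Bew A)
    (hbl2 : ∀ A B : LA.Sentence, T ⊨ᵇ (boxS Bew (A ⟹ B) ⟹ boxS Bew A ⟹ boxS Bew B))
    (hbl3 : ∀ A : LA.Sentence, T ⊨ᵇ (boxS Bew A ⟹ boxS Bew (boxS Bew A)))
    (G : LA.Sentence) (hG : T ⊨ᵇ (G ⇔ BoundedFormula.not (boxS Bew G))) :
    ¬ T ⊨ᵇ BoundedFormula.not (boxS Bew (⊥ : LA.Sentence)) :=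
  godel_second_general T hcon Bew hbl1 hbl2 hbl3 G hG
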